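/- For every δ ∈ [0,1), max{ (5−2δ)/(3−δ), (3−δ)/(2−δ), 1/(1−δ) } ≥ (1+√5)/2, and for δ = (3−√5)/2 all three quantities (5−2δ)/(3−δ), (3−δ)/(2−δ), and 1/(1−δ) are equal to (1+√5)/2; hence the minimum over δ ∈ [0,1) of this maximum equals the golden ratio (1+√5)/2 and is attained at δ = (3−√5)/2. -/

import Mathlib

/-!
Write `φ` for the golden ratio; then `(3 - √5) / 2 = 2 - φ`. The first quantity
`(5 - 2δ) / (3 - δ) = 2 - 1 / (3 - δ)` decreases and the third `1 / (1 - δ)` increases on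
`δ < 1`, and `φ² = φ + 1` makes all three equal to `φ` at `δ = 2 - φ`. Hence the first is at
least `φ` to the left of `2 - φ` and the third to the right of it.
-/

/-- The maximum of the three quantities appearing in the golden-ratio analysis. -/
noncomputable def triMax (δ : ℝ) : ℝ :=
  max (max ((5 - 2 * δ) / (3 - δ)) ((3 - δ) / (2 - δ))) (1 / (1 - δ))

open Real goldenRatio

lemma goldenRatio_le_five_sub_two_mul_div_of_le {δ : ℝ} (hδ : δ ≤ 2 - φ) :
    φ ≤ (5 - 2 * δ) / (3 - δ) := by
  rw [le_div_iff₀ (by linarith [one_lt_goldenRatio])]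
  -- `5 - 2δ - φ (3 - δ) = (2 - φ) (2 - φ - δ)` since `φ² = φ + 1`
  nlinarith [mul_nonneg (sub_nonneg.2 goldenRatio_lt_two.le) (sub_nonneg.2 hδ), goldenRatio_sq]

lemma goldenRatio_le_one_div_one_sub_of_le {δ : ℝ} (hδ : 2 - φ ≤ δ) (h1 : δ < 1) :
    φ ≤ 1 / (1 - δ) := by
  rw [le_div_iff₀ (sub_pos.2 h1)]
  nlinarith [mul_le_mul_of_nonneg_left hδ goldenRatio_pos.le, goldenRatio_sq]

lemma goldenRatio_le_triMax {δ : ℝ} (h1 : δ < 1) : φ ≤ triMax δ := by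
  rcases le_total δ (2 - φ) with h | h
  · exact (goldenRatio_le_five_sub_two_mul_div_of_le h).trans
      ((le_max_left _ _).trans (le_max_left _ _))
  · exact (goldenRatio_le_one_div_one_sub_of_le h h1).trans (le_max_right _ _)

lemma quantities_two_sub_goldenRatio_eq_goldenRatio :
    (5 - 2 * (2 - φ)) / (3 - (2 - φ)) = φ ∧ (3 - (2 - φ)) / (2 - (2 - φ)) = φ ∧
      1 / (1 - (2 - φ)) = φ := by
  have hφ := one_lt_goldenRatio
  refine ⟨?_, ?_, ?_⟩ <;> rw [div_eq_iff (by linarith)] <;> linear_combination -goldenRatio_sq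

lemma triMax_two_sub_goldenRatio : triMax (2 - φ) = φ := by
  obtain ⟨h₁, h₂, h₃⟩ := quantities_two_sub_goldenRatio_eq_goldenRatio
  rw [triMax, h₁, h₂, h₃, max_self, max_self]

/-- for every `δ ∈ [0,1)` the maximum of the three quantities is at least the
golden ratio `(1+√5)/2`; at `δ = (3-√5)/2` all three quantities equal the golden ratio;
hence the minimum over `δ ∈ [0,1)` of the maximum equals the golden ratio and is attained. -/
theorem triMax_golden :
    (∀ δ : ℝ, 0 ≤ δ → δ < 1 → (1 + Real.sqrt 5) / 2 ≤ triMax δ) ∧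
    ((5 - 2 * ((3 - Real.sqrt 5) / 2)) / (3 - (3 - Real.sqrt 5) / 2)
        = (1 + Real.sqrt 5) / 2 ∧
      (3 - (3 - Real.sqrt 5) / 2) / (2 - (3 - Real.sqrt 5) / 2)
        = (1 + Real.sqrt 5) / 2 ∧
      1 / (1 - (3 - Real.sqrt 5) / 2) = (1 + Real.sqrt 5) / 2) ∧
    IsLeast (triMax '' Set.Ico (0 : ℝ) 1) ((1 + Real.sqrt 5) / 2) := by
  have hδ : (3 - √5) / 2 = 2 - φ := by rw [goldenRatio]; ring
  rw [hδ, show (1 + √5) / 2 = φ from rfl]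
  refine ⟨fun δ _ h1 ↦ goldenRatio_le_triMax h1, quantities_two_sub_goldenRatio_eq_goldenRatio,
    ⟨2 - φ, ⟨?_, ?_⟩, triMax_two_sub_goldenRatio⟩, ?_⟩
  · linarith [goldenRatio_lt_two]
  · linarith [one_lt_goldenRatio]
  · rintro _ ⟨δ, ⟨-, h1⟩, rfl⟩
    exact goldenRatio_le_triMax h1
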